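/- arXiv:math/0501505 — 3 statements merged into one kernel-verified Lean document; each statement's English description precedes it below -/
import Mathlib

section
/- For n ≥ 3 and g(x) = -x + x^{(n+2)/(n-2)}, the function Δ(x) = (x-1)·[g'(x)·g''(1) - g'(1)·g''(x)] is nonnegative for all x > 0. -/
/-!
With `p = (n + 2) / (n - 2) > 1` and `g x = -x + x ^ p` one has `g' x = p x ^ (p - 1) - 1` and
`g'' x = p (p - 1) x ^ (p - 2)`, and `Δ` factors as
`p (p - 1) ((x - 1) (x ^ (p - 1) - 1) + (p - 1) x ^ (p - 2) (x - 1) ^ 2)`.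
Both summands are nonnegative since `x ^ (p - 1) - 1` has the sign of `x - 1`.
-/

open Real

lemma deriv_neg_add_rpow {p : ℝ} (hp : 1 ≤ p) :
    deriv (fun x : ℝ => -x + x ^ p) = fun x => -1 + p * x ^ (p - 1) := by
  funext x
  simpa using ((hasDerivAt_id x).fun_neg.fun_add
    (hasDerivAt_rpow_const (x := x) (Or.inr hp))).deriv

lemma deriv_deriv_neg_add_rpow {p : ℝ} (hp : 1 ≤ p) {x : ℝ} (hx : x ≠ 0) :
    deriv (deriv fun x : ℝ => -x + x ^ p) x = p * (p - 1) * x ^ (p - 2) := by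
  have h := ((hasDerivAt_rpow_const (p := p - 1) (Or.inl hx)).const_mul p).const_add (-1)
  rw [deriv_neg_add_rpow hp, h.deriv, sub_sub, one_add_one_eq_two, mul_assoc]

lemma sub_one_mul_rpow_sub_one_nonneg {x q : ℝ} (hx : 0 ≤ x) (hq : 0 ≤ q) :
    0 ≤ (x - 1) * (x ^ q - 1) := by
  rcases le_total x 1 with hx1 | hx1
  · exact mul_nonneg_of_nonpos_of_nonpos (by linarith)
      (by linarith [rpow_le_one hx hx1 hq])
  · exact mul_nonneg (by linarith) (by linarith [one_le_rpow hx1 hq])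

theorem chow_wang_delta_neg_add_rpow_nonneg {p : ℝ} (hp : 1 ≤ p) {x : ℝ} (hx : 0 < x) :
    let g := fun x : ℝ => -x + x ^ p
    0 ≤ (x - 1) * (deriv g x * deriv (deriv g) 1 - deriv g 1 * deriv (deriv g) x) := by
  intro g
  have hpow : x ^ (p - 1) = x ^ (p - 2) * x := by
    rw [show p - 1 = p - 2 + 1 by ring, rpow_add hx, rpow_one]
  have hfactor : (x - 1) * (deriv g x * deriv (deriv g) 1 - deriv g 1 * deriv (deriv g) x) =
      p * (p - 1) * ((x - 1) * (x ^ (p - 1) - 1) + (p - 1) * x ^ (p - 2) * (x - 1) ^ 2) := by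
    rw [deriv_deriv_neg_add_rpow hp hx.ne', deriv_deriv_neg_add_rpow hp one_ne_zero,
      deriv_neg_add_rpow hp]
    simp only [one_rpow, hpow]
    ring
  rw [hfactor]
  have hp1 : 0 ≤ p - 1 := by linarith
  have hsign := sub_one_mul_rpow_sub_one_nonneg hx.le hp1
  have hsq : 0 ≤ (p - 1) * x ^ (p - 2) * (x - 1) ^ 2 := by positivity
  exact mul_nonneg (mul_nonneg (by linarith) hp1) (add_nonneg hsign hsq)

theorem chow_wang_delta_nonneg_for_yamabe_nonlinearity
    (n : ℕ) (hn : 3 ≤ n)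
    (g : ℝ → ℝ)
    (hg : ∀ x : ℝ, g x = -x + x ^ (((n : ℝ) + 2) / ((n : ℝ) - 2)))
    (Δ : ℝ → ℝ)
    (hΔ : ∀ x, Δ x = (x - 1) * (deriv g x * deriv (deriv g) 1 - deriv g 1 * deriv (deriv g) x)) :
    ∀ x : ℝ, 0 < x → 0 ≤ Δ x := by
  intro x hx
  have hn' : (3 : ℝ) ≤ n := by exact_mod_cast hn
  have hp : 1 ≤ ((n : ℝ) + 2) / ((n : ℝ) - 2) := by
    rw [one_le_div (by linarith)]; linarith
  rw [hΔ x, funext hg]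
  exact chow_wang_delta_neg_add_rpow_nonneg hp hx
end

section
/- A solution u of the first-order equation (u')² = ((n-2)/2)²·(u² - u^{2n/(n-2)}) + c̄ with u : ℝ → (0,∞) bounded away from 0 and ∞, non-constant, and periodic can exist only if the energy constant c̄ satisfies -(2/n)·((n-2)/2)²·((n-2)/n)^{(n-2)/2} < c̄ < 0. -/
/-!
At a maximum and at a minimum of the periodic solution `u` we have `u' = 0`, so with `y = u²` and
`g y = y - y ^ (n / (n - 2))` the first integral gives `c̄ = -((n - 2) / 2)² g(u_min²)
= -((n - 2) / 2)² g(u_max²)`. Since `g` is strictly concave on `[0, ∞)` with `g 0 = 0`, equal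
values at two distinct points `0 < y₁ < y₂` force `g y₁ > 0`, and are strictly below the maximum
of `g`, which is `(2 / n) ((n - 2) / n) ^ ((n - 2) / 2)`, attained at
`y = ((n - 2) / n) ^ ((n - 2) / 2)`.
-/

open Real Set

section StrictConcave

variable {s : Set ℝ} {f : ℝ → ℝ}

theorem StrictConcaveOn.lt_midpoint_of_eq (hf : StrictConcaveOn ℝ s f) {x y : ℝ} (hx : x ∈ s)
    (hy : y ∈ s) (hxy : x ≠ y) (h : f x = f y) : f x < f ((x + y) / 2) := by
  have := hf.lt_on_open_segment' hx hy hxy (a := 1 / 2) (b := 1 / 2) (by norm_num) (by norm_num)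
    (by norm_num)
  rwa [← h, min_self, smul_eq_mul, smul_eq_mul, ← mul_add, one_div_mul_eq_div] at this

theorem StrictConcaveOn.pos_of_eq_of_lt (hf : StrictConcaveOn ℝ s f) (h0 : 0 ∈ s) (hf0 : f 0 = 0)
    {x y : ℝ} (hx : 0 < x) (hxy : x < y) (hy : y ∈ s) (h : f x = f y) : 0 < f x := by
  have := hf.slope_anti_adjacent h0 hy hx hxy
  rw [← h, sub_self, zero_div, hf0, sub_zero, sub_zero] at this
  exact (div_pos_iff_of_pos_right hx).1 this

end StrictConcave

theorem strictConcaveOn_sub_rpow {r : ℝ} (hr : 1 < r) :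
    StrictConcaveOn ℝ (Ici 0) fun y : ℝ ↦ y - y ^ r :=
  (concaveOn_id (convex_Ici 0)).sub_strictConvexOn (strictConvexOn_rpow hr)

/-- The tangent line of the convex function `y ↦ y ^ r` at the point `P` where its slope is `1`
lies below it. -/
theorem sub_rpow_le_of_mul_rpow_sub_one_eq_one {r P y : ℝ} (hr : 1 ≤ r) (hP : 0 < P)
    (hslope : r * P ^ (r - 1) = 1) (hy : 0 ≤ y) : y - y ^ r ≤ P - P ^ r := by
  have hbernoulli := one_add_mul_self_le_rpow_one_add (s := y / P - 1)
    (by linarith [div_nonneg hy hP.le]) hr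
  rw [add_sub_cancel, div_rpow hy hP.le, le_div_iff₀ (rpow_pos_of_pos hP r)] at hbernoulli
  have hPr : P ^ r = P * P ^ (r - 1) := by
    rw [rpow_sub_one hP.ne']
    field_simp
  have : (1 + r * (y / P - 1)) * P ^ r = P ^ r + (y - P) * (r * P ^ (r - 1)) := by
    rw [hPr]
    field_simp
  rw [this, hslope] at hbernoulli
  linarith

theorem sub_rpow_le_two_div_mul {N y : ℝ} (hN : 2 < N) (hy : 0 ≤ y) :
    y - y ^ (N / (N - 2)) ≤ 2 / N * ((N - 2) / N) ^ ((N - 2) / 2) := by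
  have hN2 : 0 < N - 2 := by linarith
  have hθ : 0 < (N - 2) / N := by positivity
  set P := ((N - 2) / N) ^ ((N - 2) / 2)
  have hP : 0 < P := rpow_pos_of_pos hθ _
  have hPθ : P ^ (N / (N - 2) - 1) = (N - 2) / N := by
    rw [← rpow_mul hθ.le, show (N - 2) / 2 * (N / (N - 2) - 1) = 1 by field_simp; ring, rpow_one]
  have hr : 1 ≤ N / (N - 2) := by rw [le_div_iff₀ hN2]; linarith
  have hslope : N / (N - 2) * P ^ (N / (N - 2) - 1) = 1 := by
    rw [hPθ]
    field_simp
  calc y - y ^ (N / (N - 2)) ≤ P - P ^ (N / (N - 2)) :=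
        sub_rpow_le_of_mul_rpow_sub_one_eq_one hr hP hslope hy
    _ = 2 / N * P := by
        rw [← div_mul_cancel₀ (P ^ (N / (N - 2))) hP.ne', ← rpow_sub_one hP.ne', hPθ]
        field_simp
        ring

theorem Function.Periodic.exists_deriv_eq_zero_lt {u : ℝ → ℝ} {T : ℝ}
    (hper : Function.Periodic u T) (hT : T ≠ 0) (hcont : Continuous u)
    (hnonconst : ∃ t₁ t₂, u t₁ ≠ u t₂) :
    ∃ t₁ t₂, deriv u t₁ = 0 ∧ deriv u t₂ = 0 ∧ u t₁ < u t₂ := by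
  have hrange := hper.compact_of_continuous hT hcont
  obtain ⟨_, ⟨tmin, rfl⟩, hmin⟩ := hrange.exists_isLeast (range_nonempty u)
  obtain ⟨_, ⟨tmax, rfl⟩, hmax⟩ := hrange.exists_isGreatest (range_nonempty u)
  refine ⟨tmin, tmax, IsLocalMin.deriv_eq_zero (.of_forall fun t ↦ hmin ⟨t, rfl⟩),
    IsLocalMax.deriv_eq_zero (.of_forall fun t ↦ hmax ⟨t, rfl⟩), ?_⟩
  obtain ⟨t₁, t₂, hne⟩ := hnonconst
  by_contra! hle
  exact hne (by linarith [hmin ⟨t₁, rfl⟩, hmax ⟨t₁, rfl⟩, hmin ⟨t₂, rfl⟩, hmax ⟨t₂, rfl⟩])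

theorem energy_range_for_periodic_orbits
    (n : ℕ) (hn : 3 ≤ n) (cbar : ℝ)
    (u : ℝ → ℝ) (hcont : Continuous u)
    (hfirst : ∀ t, (deriv u t) ^ 2
        = (((n : ℝ) - 2) / 2) ^ 2 * ((u t) ^ 2 - (u t) ^ (2 * (n : ℝ) / ((n : ℝ) - 2))) + cbar)
    (hbdd : ∃ m M : ℝ, 0 < m ∧ ∀ t, m ≤ u t ∧ u t ≤ M)
    (hnonconst : ∃ t₁ t₂, u t₁ ≠ u t₂)
    (hper : ∃ T > 0, Function.Periodic u T) :
    -(2 / (n : ℝ)) * (((n : ℝ) - 2) / 2) ^ 2 * (((n : ℝ) - 2) / n) ^ (((n : ℝ) - 2) / 2) < cbar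
      ∧ cbar < 0 := by
  obtain ⟨m, _, hm, hbd⟩ := hbdd
  obtain ⟨T, hT, hperiod⟩ := hper
  obtain ⟨tmin, tmax, hdmin, hdmax, hlt⟩ :=
    hperiod.exists_deriv_eq_zero_lt hT.ne' hcont hnonconst
  have hN : (2 : ℝ) < n := by exact_mod_cast (by omega : 2 < n)
  set N : ℝ := (n : ℝ)
  set g : ℝ → ℝ := fun y ↦ y - y ^ (N / (N - 2))
  have hcrit : ∀ t, deriv u t = 0 → cbar = -((N - 2) / 2) ^ 2 * g (u t ^ 2) := by
    intro t ht
    have hpow : u t ^ (2 * N / (N - 2)) = (u t ^ 2) ^ (N / (N - 2)) := by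
      rw [mul_div_assoc, rpow_mul (hm.le.trans (hbd t).1), rpow_two]
    have := hfirst t
    rw [ht, hpow] at this
    linarith
  have hu : 0 < u tmin := hm.trans_le (hbd tmin).1
  have hpos : 0 < u tmin ^ 2 := pow_pos hu 2
  have hsq : u tmin ^ 2 < u tmax ^ 2 := pow_lt_pow_left₀ hlt hu.le two_ne_zero
  have hk : 0 < ((N - 2) / 2) ^ 2 := pow_pos (by linarith) 2
  have hg : g (u tmin ^ 2) = g (u tmax ^ 2) :=
    mul_left_cancel₀ (neg_ne_zero.2 hk.ne') ((hcrit tmin hdmin).symm.trans (hcrit tmax hdmax))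
  have hr : 1 < N / (N - 2) := by rw [lt_div_iff₀] <;> linarith
  have hconcave := strictConcaveOn_sub_rpow hr
  have hlower := (hconcave.lt_midpoint_of_eq hpos.le (hpos.trans hsq).le hsq.ne hg).trans_le
    (sub_rpow_le_two_div_mul hN (by positivity))
  have hupper := hconcave.pos_of_eq_of_lt self_mem_Ici (by simp [zero_rpow (one_pos.trans hr).ne'])
    hpos hsq (hpos.trans hsq).le hg
  constructor <;> nlinarith [hcrit tmin hdmin]
end

section
/- If u : ℝ → (0,∞) is a smooth periodic solution of u'' - ((n-2)²/4)u + (n(n-2)/4)u^{(n+2)/(n-2)} = 0, then the quantity D₀R̄₀₀ := 2((n-1)/(n-2))·u'''/u + 2((n+2)/(n-2))·u'u''/u² - 4(u')³/u³ vanishes identically if and only if u is constant. -/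
lemma alg1 (nr U V X : ℝ) (hU : 0 < U) (hd : 0 < nr - 2) (hV : V ≠ 0)
    (hE : 2 * ((nr - 1) / (nr - 2)) *
        ((nr - 2)^2/4 * V - nr*(nr - 2)/4 * ((nr + 2)/(nr - 2) * (X / U) * V)) / U
      + 2 * ((nr + 2) / (nr - 2)) * V * ((nr - 2)^2/4 * U - nr*(nr - 2)/4 * X) / U ^ 2
      - 4 * V ^ 3 / U ^ 3 = 0) :
    (nr - 2)*(2*nr + 1)/2 * U^2 - nr*(nr + 2)*(2*nr - 3)/(2*(nr - 2)) * (X * U) - 4 * V^2 = 0 := by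
  have hUne : U ≠ 0 := ne_of_gt hU
  have hdne : nr - 2 ≠ 0 := ne_of_gt hd
  have hiden : 2 * ((nr - 1) / (nr - 2)) *
        ((nr - 2)^2/4 * V - nr*(nr - 2)/4 * ((nr + 2)/(nr - 2) * (X / U) * V)) / U
      + 2 * ((nr + 2) / (nr - 2)) * V * ((nr - 2)^2/4 * U - nr*(nr - 2)/4 * X) / U ^ 2
      - 4 * V ^ 3 / U ^ 3
      = V * ((nr - 2)*(2*nr + 1)/2 * U^2 - nr*(nr + 2)*(2*nr - 3)/(2*(nr - 2)) * (X * U) - 4 * V^2) / U^3 := by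
    field_simp
    ring
  rw [hiden] at hE
  have h3 : U ^ 3 ≠ 0 := pow_ne_zero _ hUne
  have := (div_eq_zero_iff.mp hE).resolve_right h3
  exact (mul_eq_zero.mp this).resolve_left hV

lemma alg2 (nr U V W X Y : ℝ) (hU : 0 < U) (hn3 : 3 ≤ nr) (hV : V ≠ 0)
    (hY : Y = X / U)
    (hW : W = (nr - 2)^2/4 * U - nr*(nr - 2)/4 * X)
    (hD : (nr - 2)*(2*nr + 1)/2 * (2 * U ^ 1 * V)
        - nr*(nr + 2)*(2*nr - 3)/(2*(nr - 2)) * ((V * ((nr + 2)/(nr - 2)) * Y) * U + X * V)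
        - 4 * (2 * V ^ 1 * W) = 0) :
    X * (nr * (13*nr^2 - 30*nr + 16)) = 5 * (nr - 2)^3 * U := by
  have hd : (0:ℝ) < nr - 2 := by linarith
  have hdne : nr - 2 ≠ 0 := ne_of_gt hd
  have hUne : U ≠ 0 := ne_of_gt hU
  subst hY hW
  have hP : V * ((nr - 2)*(2*nr + 1) * U
      - nr*(nr + 2)*(2*nr - 3)/(2*(nr - 2)) * (((nr + 2)/(nr - 2)) * (X/U) * U + X)
      - 8 * ((nr - 2)^2/4 * U - nr*(nr - 2)/4 * X)) = V * 0 := by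
    linear_combination hD
  have hP2 := mul_left_cancel₀ hV hP
  field_simp at hP2
  have h4 : U * (X * (nr * (13*nr^2 - 30*nr + 16))) = U * (5 * (nr - 2)^3 * U) := by
    linear_combination (-U/8) * hP2
  exact mul_left_cancel₀ hUne h4

theorem ricci_covariant_derivative_vanishes_iff_constant
    (n : ℕ) (hn : 3 ≤ n)
    (u : ℝ → ℝ) (hu : ContDiff ℝ (⊤ : ℕ∞) u) (hupos : ∀ t, 0 < u t)
    (hper : ∃ T > 0, Function.Periodic u T)
    (hode : ∀ t, deriv (deriv u) t - (((n : ℝ) - 2) ^ 2 / 4) * u t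
        + ((n : ℝ) * ((n : ℝ) - 2) / 4) * (u t) ^ (((n : ℝ) + 2) / ((n : ℝ) - 2)) = 0) :
    (∀ t, 2 * (((n : ℝ) - 1) / ((n : ℝ) - 2)) * deriv (deriv (deriv u)) t / u t
        + 2 * (((n : ℝ) + 2) / ((n : ℝ) - 2)) * deriv u t * deriv (deriv u) t / (u t) ^ 2
        - 4 * (deriv u t) ^ 3 / (u t) ^ 3 = 0)
      ↔ (∃ c : ℝ, ∀ t, u t = c) := by
  have hud : Differentiable ℝ u := hu.differentiable (by simp)
  constructor
  · intro hE
    set nr : ℝ := (n : ℝ) with hnr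
    have hn3 : (3:ℝ) ≤ nr := by rw [hnr]; exact_mod_cast hn
    have hd2 : (0:ℝ) < nr - 2 := by linarith
    have hdne : nr - 2 ≠ 0 := ne_of_gt hd2
    have hu' : ContDiff ℝ (⊤:ℕ∞) (deriv u) := (contDiff_infty_iff_deriv.mp (hu.of_le (by simp))).2
    have hud' : Differentiable ℝ (deriv u) := hu'.differentiable (by simp)
    have hW : ∀ t, deriv (deriv u) t
        = (nr - 2)^2/4 * u t - nr*(nr - 2)/4 * (u t) ^ ((nr + 2)/(nr - 2)) := by
      intro t; have h := hode t; linarith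
    have hfun : deriv (deriv u)
        = fun s => (nr - 2)^2/4 * u s - nr*(nr - 2)/4 * (u s) ^ ((nr + 2)/(nr - 2)) :=
      funext hW
    have hZ : ∀ t, deriv (deriv (deriv u)) t
        = (nr - 2)^2/4 * deriv u t
          - nr*(nr - 2)/4 * ((nr + 2)/(nr - 2) * ((u t) ^ ((nr + 2)/(nr - 2)) / u t) * deriv u t) := by
      intro t
      rw [hfun]
      have h1 : HasDerivAt
          (fun s => (nr - 2)^2/4 * u s - nr*(nr - 2)/4 * (u s) ^ ((nr + 2)/(nr - 2)))
          ((nr - 2)^2/4 * deriv u t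
            - nr*(nr - 2)/4 * (deriv u t * ((nr + 2)/(nr - 2)) * (u t) ^ ((nr + 2)/(nr - 2) - 1))) t :=
        (((hud t).hasDerivAt.const_mul ((nr - 2)^2/4)).sub
          (((hud t).hasDerivAt.rpow_const (Or.inl (hupos t).ne')).const_mul (nr*(nr - 2)/4)))
      rw [h1.deriv, Real.rpow_sub (hupos t), Real.rpow_one]; ring
    have key : ∀ t, deriv u t ≠ 0 →
        (nr - 2)*(2*nr + 1)/2 * (u t)^2
          - nr*(nr + 2)*(2*nr - 3)/(2*(nr - 2)) * ((u t) ^ ((nr + 2)/(nr - 2)) * u t)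
          - 4 * (deriv u t)^2 = 0 := by
      intro t hV
      have hE0 := hE t
      rw [hZ t, hW t] at hE0
      exact alg1 nr (u t) (deriv u t) ((u t) ^ ((nr + 2)/(nr - 2))) (hupos t) hd2 hV hE0
    have hSopen : IsOpen {s : ℝ | deriv u s ≠ 0} :=
      isOpen_compl_singleton.preimage hu'.continuous
    set K : ℝ := 5 * (nr - 2)^3 / (nr * (13*nr^2 - 30*nr + 16)) with hK
    set c0 : ℝ := K ^ (((nr + 2)/(nr - 2) - 1)⁻¹) with hc0
    have hBpos : 0 < nr * (13*nr^2 - 30*nr + 16) := by nlinarith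
    have key2 : ∀ t, deriv u t ≠ 0 → u t = c0 := by
      intro t hV
      have hU := hupos t
      -- F vanishes in a neighborhood of t
      have hFev : (fun s => (nr - 2)*(2*nr + 1)/2 * (u s)^2
          - nr*(nr + 2)*(2*nr - 3)/(2*(nr - 2)) * ((u s) ^ ((nr + 2)/(nr - 2)) * u s)
          - 4 * (deriv u s)^2) =ᶠ[nhds t] (fun _ => (0:ℝ)) := by
        filter_upwards [hSopen.mem_nhds hV] with s hs
        exact key s hs
      have hFder := ((((hud t).hasDerivAt.pow 2).const_mul ((nr - 2)*(2*nr + 1)/2)).sub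
          ((((hud t).hasDerivAt.rpow_const (p := (nr + 2)/(nr - 2)) (Or.inl hU.ne')).mul
            (hud t).hasDerivAt).const_mul (nr*(nr + 2)*(2*nr - 3)/(2*(nr - 2))))).sub
          (((hud' t).hasDerivAt.pow 2).const_mul 4)
      have hD0 : deriv (fun s => (nr - 2)*(2*nr + 1)/2 * (u s)^2
          - nr*(nr + 2)*(2*nr - 3)/(2*(nr - 2)) * ((u s) ^ ((nr + 2)/(nr - 2)) * u s)
          - 4 * (deriv u s)^2) t = 0 := by
        rw [hFev.deriv_eq]; simp
      rw [(show HasDerivAt (fun s => (nr - 2)*(2*nr + 1)/2 * (u s)^2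
          - nr*(nr + 2)*(2*nr - 3)/(2*(nr - 2)) * ((u s) ^ ((nr + 2)/(nr - 2)) * u s)
          - 4 * (deriv u s)^2) _ t from hFder).deriv] at hD0
      have hAB := alg2 nr (u t) (deriv u t) (deriv (deriv u) t)
        ((u t) ^ ((nr + 2)/(nr - 2))) ((u t) ^ ((nr + 2)/(nr - 2) - 1))
        hU hn3 hV (by rw [Real.rpow_sub hU, Real.rpow_one]) (hW t) (by linear_combination hD0)
      -- u t ^ (p-1) = K
      have hq : (u t) ^ ((nr + 2)/(nr - 2) - 1) = K := by
        rw [Real.rpow_sub hU, Real.rpow_one, hK]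
        rw [div_eq_div_iff hU.ne' (ne_of_gt hBpos)]
        exact hAB
      have hqne : ((nr + 2)/(nr - 2) - 1) ≠ 0 := by
        have : 1 < (nr + 2)/(nr - 2) := by
          rw [lt_div_iff₀ hd2]; linarith
        linarith
      calc u t = ((u t) ^ ((nr + 2)/(nr - 2) - 1)) ^ (((nr + 2)/(nr - 2) - 1)⁻¹) := by
            exact (Real.rpow_rpow_inv hU.le hqne).symm
          _ = c0 := by rw [hq, hc0]
    have hall : ∀ t, deriv u t = 0 := by
      intro t
      by_contra hV
      have hev : u =ᶠ[nhds t] (fun _ => c0) := by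
        filter_upwards [hSopen.mem_nhds hV] with s hs
        exact key2 s hs
      have hd0 : deriv u t = deriv (fun _ => c0) t := hev.deriv_eq
      rw [deriv_const] at hd0
      exact hV hd0
    exact ⟨u 0, fun t => is_const_of_deriv_eq_zero hud hall t 0⟩
  · rintro ⟨c, hc⟩ t
    have hu0 : u = fun _ => c := funext hc
    rw [hu0]
    simp
end
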